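/- Define the q-Hermite polynomials by H_n(x;q) = Σ_{k=0}^{⌊n/2⌋} (-1)^k q^{k(k-1)} [n choose 2k]_q M_q(2k-1) x^{n-2k}. Then D_q H_n(x;q) = [n]_q H_{n-1}(x;q) for all n ≥ 1, where D_q is the q-derivative (D_q x^m = [m]_q x^{m-1}). -/

import Mathlib

open Polynomial Finset
noncomputable section
abbrev Fq : Type := RatFunc ℚ
def qv : Fq := RatFunc.X
def qint (n : ℕ) : Fq := ∑ i ∈ Finset.range n, qv ^ i
def qfact (n : ℕ) : Fq := ∏ i ∈ Finset.range n, qint (i + 1)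
def qbinom (n k : ℕ) : Fq := if k ≤ n then qfact n / (qfact k * qfact (n - k)) else 0
def qint2 (n : ℕ) : Fq := ∑ i ∈ Finset.range n, qv ^ (2 * i)
def qfact2 (n : ℕ) : Fq := ∏ i ∈ Finset.range n, qint2 (i + 1)
def qbinom2 (n k : ℕ) : Fq := if k ≤ n then qfact2 n / (qfact2 k * qfact2 (n - k)) else 0
def Modd (k : ℕ) : Fq := ∏ j ∈ Finset.range k, qint (2 * j + 1)

def Dq (p : Polynomial Fq) : Polynomial Fq :=
  p.sum fun m a => Polynomial.C (a * qint m) * Polynomial.X ^ (m - 1)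

def Hexp (n : ℕ) : Polynomial Fq :=
  ∑ k ∈ Finset.range (n / 2 + 1),
    Polynomial.C ((-1) ^ k * qv ^ (k * (k - 1)) * qbinom n (2 * k) * Modd k) *
      Polynomial.X ^ (n - 2 * k)

/-!
Since `D_q x^m = [m]_q x^{m-1}`, applying `D_q` to `H_n` multiplies the `k`-th coefficient by
`[n-2k]_q`, and the q-analogue of `C(n,j) (n-j) = n C(n-1,j)`, namely
`[n choose j]_q [n-j]_q = [n]_q [n-1 choose j]_q`, turns it into `[n]_q` times the `k`-th
coefficient of `H_{n-1}`. For even `n` the extra top term of `H_n` then carries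
`[n-1 choose n]_q = 0`.
-/

@[simp]
lemma qint_zero : qint 0 = 0 := rfl

lemma qint_ne_zero {n : ℕ} (hn : 0 < n) : qint n ≠ 0 := by
  have hpoly : qint n = algebraMap ℚ[X] Fq (∑ i ∈ range n, X ^ i) := by
    simp [qint, qv, RatFunc.algebraMap_X]
  rw [hpoly]
  refine RatFunc.algebraMap_ne_zero fun h0 => ?_
  have h1 := congrArg (eval 1) h0
  simp only [eval_finsetSum, eval_pow, eval_X, one_pow, sum_const, card_range, nsmul_eq_mul,
    mul_one, eval_zero, Nat.cast_eq_zero] at h1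
  omega

lemma qfact_ne_zero (n : ℕ) : qfact n ≠ 0 :=
  prod_ne_zero_iff.2 fun i _ => qint_ne_zero i.succ_pos

lemma qfact_succ (n : ℕ) : qfact (n + 1) = qfact n * qint (n + 1) :=
  prod_range_succ _ _

lemma qbinom_eq_zero_of_lt {n k : ℕ} (h : n < k) : qbinom n k = 0 :=
  if_neg (Nat.not_le.2 h)

lemma qbinom_succ_mul_qint (n k : ℕ) :
    qbinom (n + 1) k * qint (n + 1 - k) = qint (n + 1) * qbinom n k := by
  rcases Nat.lt_or_ge n k with hnk | hkn
  · rw [qbinom_eq_zero_of_lt hnk, mul_zero]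
    rcases (Nat.succ_le_of_lt hnk).eq_or_lt with rfl | hlt
    · simp
    · rw [qbinom_eq_zero_of_lt hlt, zero_mul]
  · rw [qbinom, if_pos (by omega), qbinom, if_pos hkn, Nat.succ_sub hkn, qfact_succ, qfact_succ]
    have := qfact_ne_zero k
    have := qfact_ne_zero (n - k)
    have := qint_ne_zero (n - k).succ_pos
    field_simp

lemma qbinom_mul_qint_sub (n k : ℕ) :
    qbinom n k * qint (n - k) = qint n * qbinom (n - 1) k := by
  cases n with
  | zero => simp
  | succ n => exact qbinom_succ_mul_qint n k

lemma Dq_add (p q : Fq[X]) : Dq (p + q) = Dq p + Dq q :=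
  sum_add_index p q _ (fun _ => by simp) fun _ _ _ => by rw [add_mul, map_add, add_mul]

lemma Dq_sum {ι : Type*} (s : Finset ι) (f : ι → Fq[X]) :
    Dq (∑ i ∈ s, f i) = ∑ i ∈ s, Dq (f i) := by
  classical
  induction s using Finset.induction_on with
  | empty => simp [Dq]
  | insert a s ha ih => rw [sum_insert ha, sum_insert ha, Dq_add, ih]

lemma Dq_C_mul_X_pow (a : Fq) (m : ℕ) :
    Dq (C a * X ^ m) = C (a * qint m) * X ^ (m - 1) := by
  rw [C_mul_X_pow_eq_monomial, Dq, sum_monomial_index _ _ (by simp)]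

def hermiteCoeff (n k : ℕ) : Fq :=
  (-1) ^ k * qv ^ (k * (k - 1)) * qbinom n (2 * k) * Modd k

lemma Hexp_eq_sum_hermiteCoeff (n : ℕ) :
    Hexp n = ∑ k ∈ range (n / 2 + 1), C (hermiteCoeff n k) * X ^ (n - 2 * k) :=
  rfl

lemma hermiteCoeff_eq_zero_of_lt {n k : ℕ} (h : n < 2 * k) : hermiteCoeff n k = 0 := by
  rw [hermiteCoeff, qbinom_eq_zero_of_lt h, mul_zero, zero_mul]

lemma hermiteCoeff_mul_qint (n k : ℕ) :
    hermiteCoeff n k * qint (n - 2 * k) = qint n * hermiteCoeff (n - 1) k := by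
  simp only [hermiteCoeff]
  linear_combination ((-1 : Fq) ^ k * qv ^ (k * (k - 1)) * Modd k) * qbinom_mul_qint_sub n (2 * k)

theorem stmt_3_general (n : ℕ) :
    Dq (Hexp n) = Polynomial.C (qint n) * Hexp (n - 1) := by
  have hrange : range ((n - 1) / 2 + 1) ⊆ range (n / 2 + 1) :=
    range_subset_range.2 (by omega)
  rw [Hexp_eq_sum_hermiteCoeff, Dq_sum, Hexp_eq_sum_hermiteCoeff, mul_sum]
  simp only [Dq_C_mul_X_pow, hermiteCoeff_mul_qint, C_mul, mul_assoc]
  refine (sum_subset hrange fun k _ hk => ?_).symm.trans (sum_congr rfl fun k _ => ?_)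
  · rw [mem_range, not_lt] at hk
    rw [hermiteCoeff_eq_zero_of_lt (by omega), C_0, zero_mul, mul_zero]
  · rw [Nat.sub_right_comm]

/-- The q-derivative lowers the q-Hermite polynomials: . -/
theorem stmt_3 (n : ℕ) (hn : 1 ≤ n) :
    Dq (Hexp n) = Polynomial.C (qint n) * Hexp (n - 1) :=
  stmt_3_general n
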